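/- arXiv:2202.00954 — 2 statements merged into one kernel-verified Lean document; each statement's English description precedes it below -/
import Mathlib

section
/- Every optimal Wasserstein-2 barycenter ν̂ (a minimizer of Ψ over probability measures on ℝ^d) can be obtained as ν̂ = (M_λ)_# π̂ for some optimal multi-marginal plan π̂ minimizing Φ over Π(μ¹,…,μ^N). In particular, every optimal barycenter is a finitely supported measure whose support is contained in { Σ_{i=1}^N λ_i x^i : x^i ∈ supp(μ^i) for all i }. -/
open MeasureTheory
open scoped ENNReal

noncomputable section

/-- Points of the `d`-dimensional Euclidean space. -/
abbrev Pt (d : ℕ) := EuclideanSpace ℝ (Fin d)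

/-- A measure is finitely supported if it vanishes outside a finite set. -/
def FinitelySupported {α : Type*} [MeasurableSpace α] (μ : Measure α) : Prop :=
  ∃ s : Finset α, μ ((s : Set α)ᶜ) = 0

/-- `λ` lies in the open probability simplex. -/
def InSimplex {N : ℕ} (l : Fin N → ℝ) : Prop :=
  (∀ i, 0 < l i) ∧ ∑ i, l i = 1

/-- `π` is a multi-marginal transport plan with marginals `μ i`. -/
def IsPlan {d N : ℕ} (μ : Fin N → Measure (Pt d)) (π : Measure (Fin N → Pt d)) : Prop :=
  IsProbabilityMeasure π ∧ ∀ i, π.map (fun x => x i) = μ i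

/-- The multi-marginal optimal transport cost `Φ(π)`. -/
def MOT {d N : ℕ} (l : Fin N → ℝ) (π : Measure (Fin N → Pt d)) : ℝ≥0∞ :=
  ∫⁻ x, ∑ s : Fin N, ∑ t : Fin N,
    (if s < t then ENNReal.ofReal (l s * l t * ‖x s - x t‖ ^ 2) else 0) ∂π

/-- `π` is a coupling of `μ` and `ν`. -/
def IsCoupling {α : Type*} [MeasurableSpace α] (μ ν : Measure α) (π : Measure (α × α)) : Prop :=
  IsProbabilityMeasure π ∧ π.map Prod.fst = μ ∧ π.map Prod.snd = ν

/-- The squared Wasserstein-2 distance: the optimal squared-Euclidean transport cost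
over all couplings. -/
def W2sq {d : ℕ} (μ ν : Measure (Pt d)) : ℝ≥0∞ :=
  sInf { c : ℝ≥0∞ | ∃ π : Measure (Pt d × Pt d), IsCoupling μ ν π ∧
    c = ∫⁻ p, ENNReal.ofReal (‖p.1 - p.2‖ ^ 2) ∂π }

/-- The barycenter objective `Ψ(ν) = ∑ i λ i * W₂²(μ i, ν)`. -/
def Psi {d N : ℕ} (l : Fin N → ℝ) (μ : Fin N → Measure (Pt d)) (ν : Measure (Pt d)) : ℝ≥0∞ :=
  ∑ i, ENNReal.ofReal (l i) * W2sq (μ i) ν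

/-- The `λ`-weighted mean map `M_λ`. -/
def wmean {d N : ℕ} (l : Fin N → ℝ) (x : Fin N → Pt d) : Pt d :=
  ∑ i, l i • x i

/-- The support-as-atoms of a measure. -/
def msupport {α : Type*} [MeasurableSpace α] (μ : Measure α) : Set α :=
  {x | μ {x} ≠ 0}

/-
Couplings `γ i` of `μ i` with a common `ν` can be glued along `ν` into one measure `Γ` on
`(Fin N → Pt d) × Pt d`; since every `μ i` is finitely supported this needs no disintegration
theory, only Radon–Nikodym densities of the finitely many fibres. The pointwise identity
`∑ i, λ i ‖x i - y‖² = ∑_{s<t} λ s λ t ‖x s - x t‖² + ‖y - M_λ x‖²` turns `∑ i, λ i cost(γ i)`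
into `Φ(π) + D`, where `π` is the first marginal of `Γ` and `D = ∫ ‖y - M_λ x‖² dΓ`.
As `Ψ((M_λ)_# π) ≤ Φ(π)`, optimality of `ν` forces `D ≤ ε` whenever the `γ i` are `ε`-optimal.
With `ε → 0` this shows that `ν` lives on the finite set of weighted means of support points;
then optimal couplings exist by compactness, `D = 0`, so `ν = (M_λ)_# π` and
`Φ(π) = Ψ(ν) ≤ Ψ((M_λ)_# π') ≤ Φ(π')` for every plan `π'`.
-/

section FiniteSupport

variable {α : Type*} [MeasurableSpace α] {ρ : Measure α}

theorem msupport_subset_of_compl_null {s : Set α} (hs : ρ sᶜ = 0) : msupport ρ ⊆ s :=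
  fun x hx => by
    by_contra hxs
    exact hx (measure_mono_null (Set.singleton_subset_iff.2 hxs) hs)

theorem finitelySupported_of_compl_null {s : Set α} (hfin : s.Finite) (hs : ρ sᶜ = 0) :
    FinitelySupported ρ :=
  ⟨hfin.toFinset, by rwa [Set.Finite.coe_toFinset]⟩

theorem continuous_finsetSum_smul_dirac_apply (s : Finset α) (A : Set α) :
    Continuous fun c : α → ℝ≥0∞ => (∑ x ∈ s, c x • Measure.dirac x) A := by
  simp only [Measure.finsetSum_apply, Measure.smul_apply, smul_eq_mul]
  exact continuous_finsetSum _ fun x _ =>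
    (ENNReal.continuous_mul_const (measure_ne_top _ _)).comp (continuous_apply x)

variable [MeasurableSingletonClass α] {s : Finset α}

theorem lintegral_eq_sum_of_compl_null (hs : ρ (↑s)ᶜ = 0) (g : α → ℝ≥0∞) :
    ∫⁻ x, g x ∂ρ = ∑ x ∈ s, g x * ρ {x} := by
  rw [← lintegral_finset, Measure.restrict_eq_self_of_ae_mem (s := (s : Set α)) (mem_ae_iff.2 hs)]

theorem eq_sum_smul_dirac_of_compl_null (hs : ρ (↑s)ᶜ = 0) :
    ρ = ∑ x ∈ s, ρ {x} • Measure.dirac x := by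
  ext A hA
  rw [← lintegral_indicator_one hA, lintegral_eq_sum_of_compl_null hs, Measure.finsetSum_apply]
  refine Finset.sum_congr rfl fun x _ => ?_
  rw [Measure.smul_apply, Measure.dirac_apply' _ hA, smul_eq_mul, mul_comm]

theorem ext_of_compl_null {ρ' : Measure α} (hs : ρ (↑s)ᶜ = 0) (hs' : ρ' (↑s)ᶜ = 0)
    (h : ∀ x ∈ s, ρ {x} = ρ' {x}) : ρ = ρ' := by
  rw [eq_sum_smul_dirac_of_compl_null hs, eq_sum_smul_dirac_of_compl_null hs']
  exact Finset.sum_congr rfl fun x hx => by rw [h x hx]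

theorem finsetSum_smul_dirac_compl (c : α → ℝ≥0∞) :
    (∑ x ∈ s, c x • Measure.dirac x) (↑s)ᶜ = 0 := by
  simp +contextual [Measure.finsetSum_apply]

theorem lintegral_finsetSum_smul_dirac (c g : α → ℝ≥0∞) :
    ∫⁻ x, g x ∂(∑ x ∈ s, c x • Measure.dirac x) = ∑ x ∈ s, c x * g x := by
  rw [lintegral_eq_sum_of_compl_null (finsetSum_smul_dirac_compl c)]
  refine Finset.sum_congr rfl fun x hx => ?_
  rw [Measure.finsetSum_apply, Finset.sum_eq_single_of_mem x hx]
  · simp [mul_comm]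
  · intro y _ hyx
    simp [Measure.dirac_apply' _ (measurableSet_singleton x), hyx]

theorem FinitelySupported.exists_finset (hρ : FinitelySupported ρ) :
    ∃ s : Finset α, ρ (↑s)ᶜ = 0 ∧ ∀ x ∈ s, ρ {x} ≠ 0 := by
  classical
  obtain ⟨s, hs⟩ := hρ
  refine ⟨s.filter (ρ {·} ≠ 0), measure_mono_null (t := (↑s)ᶜ ∪ ↑(s.filter (ρ {·} = 0))) ?_
    (measure_union_null hs ?_), fun x hx => (Finset.mem_filter.1 hx).2⟩
  · intro x hx
    by_cases hxs : x ∈ s <;> simp_all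
  · rw [← sum_measure_singleton]
    exact Finset.sum_eq_zero fun x hx => (Finset.mem_filter.1 hx).2

end FiniteSupport

section Couplings

variable {α : Type*} [MeasurableSpace α]

theorem isCoupling_prod (ρ ν : Measure α) [IsProbabilityMeasure ρ] [IsProbabilityMeasure ν] :
    IsCoupling ρ ν (ρ.prod ν) :=
  ⟨inferInstance, by simp [Measure.map_fst_prod], by simp [Measure.map_snd_prod]⟩

theorem isCoupling_map_prodMk {β : Type*} [MeasurableSpace β] {π : Measure β}
    [IsProbabilityMeasure π] {f g : β → α} (hf : Measurable f) (hg : Measurable g) :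
    IsCoupling (π.map f) (π.map g) (π.map fun x => (f x, g x)) :=
  ⟨Measure.isProbabilityMeasure_map (hf.prodMk hg).aemeasurable,
    Measure.map_map measurable_fst (hf.prodMk hg), Measure.map_map measurable_snd (hf.prodMk hg)⟩

variable [MeasurableSingletonClass α] {ρ ν : Measure α} {S T : Finset α}

theorem IsCoupling.measure_compl_product_eq_zero {γ : Measure (α × α)} (hγ : IsCoupling ρ ν γ)
    (hS : ρ (↑S)ᶜ = 0) (hT : ν (↑T)ᶜ = 0) : γ (↑(S ×ˢ T))ᶜ = 0 := by
  refine measure_mono_null (t := Prod.fst ⁻¹' (↑S)ᶜ ∪ Prod.snd ⁻¹' (↑T)ᶜ) ?_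
    (measure_union_null ?_ ?_)
  · intro p hp
    by_cases hpS : p.1 ∈ S <;> simp_all
  · rwa [← Measure.map_apply measurable_fst S.measurableSet.compl, hγ.2.1]
  · rwa [← Measure.map_apply measurable_snd T.measurableSet.compl, hγ.2.2]

theorem isCoupling_finsetSum_smul_dirac [IsProbabilityMeasure ρ] (hS : ρ (↑S)ᶜ = 0)
    (hT : ν (↑T)ᶜ = 0) {q : α × α → ℝ≥0∞}
    (hqρ : ∀ a ∈ S, (∑ p ∈ S ×ˢ T, q p • Measure.dirac p) (Prod.fst ⁻¹' {a}) = ρ {a})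
    (hqν : ∀ b ∈ T, (∑ p ∈ S ×ˢ T, q p • Measure.dirac p) (Prod.snd ⁻¹' {b}) = ν {b}) :
    IsCoupling ρ ν (∑ p ∈ S ×ˢ T, q p • Measure.dirac p) := by
  have hfst : (∑ p ∈ S ×ˢ T, q p • Measure.dirac p).map Prod.fst = ρ := by
    refine ext_of_compl_null (s := S) ?_ hS fun a ha => ?_
    · rw [Measure.map_apply measurable_fst S.measurableSet.compl]
      exact measure_mono_null (fun p hp hpF => hp (Finset.mem_product.1 hpF).1)
        (finsetSum_smul_dirac_compl q)
    · rw [Measure.map_apply measurable_fst (measurableSet_singleton a), hqρ a ha]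
  have hsnd : (∑ p ∈ S ×ˢ T, q p • Measure.dirac p).map Prod.snd = ν := by
    refine ext_of_compl_null (s := T) ?_ hT fun b hb => ?_
    · rw [Measure.map_apply measurable_snd T.measurableSet.compl]
      exact measure_mono_null (fun p hp hpF => hp (Finset.mem_product.1 hpF).2)
        (finsetSum_smul_dirac_compl q)
    · rw [Measure.map_apply measurable_snd (measurableSet_singleton b), hqν b hb]
  have : IsProbabilityMeasure ((∑ p ∈ S ×ˢ T, q p • Measure.dirac p).map Prod.fst) :=
    hfst ▸ inferInstance
  exact ⟨(Measure.isProbabilityMeasure_map_iff measurable_fst.aemeasurable).1 this, hfst, hsnd⟩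

/- A coupling is determined by its weights on the finite set `S ×ˢ T`, and the admissible weights
form a closed, hence compact, subset of `α × α → ℝ≥0∞`, on which the cost is continuous. -/
theorem exists_isCoupling_forall_lintegral_le [IsProbabilityMeasure ρ] [IsProbabilityMeasure ν]
    (hS : ρ (↑S)ᶜ = 0) (hT : ν (↑T)ᶜ = 0) {c : α × α → ℝ≥0∞} (hc : ∀ p, c p ≠ ⊤) :
    ∃ γ, IsCoupling ρ ν γ ∧ ∀ γ', IsCoupling ρ ν γ' → ∫⁻ p, c p ∂γ ≤ ∫⁻ p, c p ∂γ' := by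
  classical
  let atoms : (α × α → ℝ≥0∞) → Measure (α × α) := fun q => ∑ p ∈ S ×ˢ T, q p • Measure.dirac p
  let P : Set (α × α → ℝ≥0∞) := {q | (∀ a ∈ S, atoms q (Prod.fst ⁻¹' {a}) = ρ {a}) ∧
    ∀ b ∈ T, atoms q (Prod.snd ⁻¹' {b}) = ν {b}}
  have hweights : ∀ γ, IsCoupling ρ ν γ → (fun p => γ {p}) ∈ P ∧ atoms (fun p => γ {p}) = γ := by
    intro γ hγ
    have hγ_eq : atoms (fun p => γ {p}) = γ :=
      (eq_sum_smul_dirac_of_compl_null (hγ.measure_compl_product_eq_zero hS hT)).symm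
    refine ⟨⟨fun a _ => ?_, fun b _ => ?_⟩, hγ_eq⟩
    · rw [hγ_eq, ← Measure.map_apply measurable_fst (measurableSet_singleton a), hγ.2.1]
    · rw [hγ_eq, ← Measure.map_apply measurable_snd (measurableSet_singleton b), hγ.2.2]
  have hPcompact : IsCompact P := by
    refine IsClosed.isCompact ?_
    simp only [P, Set.ofPred_and, Set.ofPred_forall]
    exact (isClosed_biInter fun a _ => isClosed_eq (continuous_finsetSum_smul_dirac_apply _ _)
      continuous_const).inter (isClosed_biInter fun b _ =>
        isClosed_eq (continuous_finsetSum_smul_dirac_apply _ _) continuous_const)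
  have hcost : Continuous fun q => ∫⁻ p, c p ∂(atoms q) := by
    simp only [atoms, lintegral_finsetSum_smul_dirac]
    exact continuous_finsetSum _ fun p _ => (ENNReal.continuous_mul_const (hc p)).comp
      (continuous_apply p)
  obtain ⟨q, ⟨hqρ, hqν⟩, hqmin⟩ := hPcompact.exists_isMinOn
    ⟨_, (hweights _ (isCoupling_prod ρ ν)).1⟩ hcost.continuousOn
  refine ⟨atoms q, isCoupling_finsetSum_smul_dirac hS hT hqρ hqν, fun γ hγ => ?_⟩
  rw [← (hweights γ hγ).2]
  exact hqmin (hweights γ hγ).1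

end Couplings

section W2

variable {d : ℕ} {ρ ν : Measure (Pt d)}

theorem W2sq_le_lintegral {γ : Measure (Pt d × Pt d)} (hγ : IsCoupling ρ ν γ) :
    W2sq ρ ν ≤ ∫⁻ p, ENNReal.ofReal (‖p.1 - p.2‖ ^ 2) ∂γ :=
  sInf_le ⟨γ, hγ, rfl⟩

theorem exists_isCoupling_lintegral_le_W2sq_add (h : W2sq ρ ν ≠ ⊤) {ε : ℝ≥0∞} (hε : ε ≠ 0) :
    ∃ γ, IsCoupling ρ ν γ ∧ ∫⁻ p, ENNReal.ofReal (‖p.1 - p.2‖ ^ 2) ∂γ ≤ W2sq ρ ν + ε := by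
  obtain ⟨_, ⟨γ, hγ, rfl⟩, hlt⟩ := sInf_lt_iff.1 (ENNReal.lt_add_right h hε)
  exact ⟨γ, hγ, hlt.le⟩

theorem exists_isCoupling_lintegral_eq_W2sq [IsProbabilityMeasure ρ] [IsProbabilityMeasure ν]
    {S T : Finset (Pt d)} (hS : ρ (↑S)ᶜ = 0) (hT : ν (↑T)ᶜ = 0) :
    ∃ γ, IsCoupling ρ ν γ ∧ ∫⁻ p, ENNReal.ofReal (‖p.1 - p.2‖ ^ 2) ∂γ = W2sq ρ ν := by
  obtain ⟨γ, hγ, hmin⟩ := exists_isCoupling_forall_lintegral_le hS hT fun _ => ENNReal.ofReal_ne_top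
  refine ⟨γ, hγ, le_antisymm (le_sInf ?_) (W2sq_le_lintegral hγ)⟩
  rintro _ ⟨γ', hγ', rfl⟩
  exact hmin γ' hγ'

end W2

theorem sum_piFinset_prod_mul {ι κ R : Type*} [Fintype ι] [DecidableEq ι] [CommSemiring R]
    (S : ι → Finset κ) (f : ι → κ → R) (i : ι) (hf : ∀ j ≠ i, ∑ b ∈ S j, f j b = 1)
    (c : κ → R) :
    ∑ x ∈ Fintype.piFinset S, (∏ j, f j (x j)) * c (x i) = ∑ a ∈ S i, f i a * c a := by
  set g := Function.update f i fun a => f i a * c a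
  have hg_ne : ∀ j ≠ i, g j = f j := fun j hj => Function.update_of_ne hj _ _
  have hg : ∀ x : ι → κ, ∏ j, g j (x j) = (∏ j, f j (x j)) * c (x i) := by
    intro x
    rw [← Finset.mul_prod_erase _ _ (Finset.mem_univ i),
      ← Finset.mul_prod_erase _ (fun j => f j (x j)) (Finset.mem_univ i),
      Finset.prod_congr rfl fun j hj => by rw [hg_ne j (Finset.ne_of_mem_erase hj)]]
    simp only [g, Function.update_self]
    ring
  calc ∑ x ∈ Fintype.piFinset S, (∏ j, f j (x j)) * c (x i)
      = ∑ x ∈ Fintype.piFinset S, ∏ j, g j (x j) := by simp only [hg]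
    _ = ∏ j, ∑ b ∈ S j, g j b := (Finset.prod_univ_sum S g).symm
    _ = ∑ a ∈ S i, f i a * c a := by
      rw [← Finset.mul_prod_erase _ _ (Finset.mem_univ i), Finset.prod_eq_one fun j hj => ?_]
      · simp [g]
      · rw [hg_ne j (Finset.ne_of_mem_erase hj), hf j (Finset.ne_of_mem_erase hj)]

section Gluing

variable {α β : Type*} [MeasurableSpace α] [MeasurableSingletonClass α] [MeasurableSpace β]

theorem comap_prodMk_le_map_snd (γ : Measure (α × β)) (a : α) :
    γ.comap (Prod.mk a) ≤ γ.map Prod.snd := by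
  refine Measure.le_iff.2 fun B hB => ?_
  rw [(measurableEmbedding_prodMk_left a).comap_apply, Measure.map_apply measurable_snd hB]
  exact measure_mono (by rintro _ ⟨y, hy, rfl⟩; exact hy)

theorem sum_map_prodMk_comap_prodMk {γ : Measure (α × β)} {S : Finset α}
    (hS : γ.map Prod.fst (↑S)ᶜ = 0) :
    ∑ a ∈ S, (γ.comap (Prod.mk a)).map (Prod.mk a) = γ := by
  have hrange : ∀ a, Set.range (Prod.mk a : β → α × β) = Prod.fst ⁻¹' {a} := by
    intro a; ext ⟨x, y⟩; simp [eq_comm]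
  simp only [(measurableEmbedding_prodMk_left _).map_comap, hrange]
  rw [← Measure.sum_coe_finset, ← Measure.restrict_biUnion_finset
    (Set.pairwiseDisjoint_fiber _ _) fun a => measurable_fst (measurableSet_singleton a),
    Finset.set_biUnion_preimage_singleton]
  rw [Measure.map_apply measurable_fst S.measurableSet.compl] at hS
  exact Measure.restrict_eq_self_of_ae_mem (mem_ae_iff.2 hS)

theorem sum_comap_prodMk {γ : Measure (α × β)} {S : Finset α}
    (hS : γ.map Prod.fst (↑S)ᶜ = 0) :
    ∑ a ∈ S, γ.comap (Prod.mk a) = γ.map Prod.snd := by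
  ext B hB
  conv_rhs => rw [← sum_map_prodMk_comap_prodMk hS]
  rw [Measure.map_apply measurable_snd hB, Measure.finsetSum_apply, Measure.finsetSum_apply]
  refine Finset.sum_congr rfl fun a _ => ?_
  rw [Measure.map_apply measurable_prodMk_left (measurable_snd hB)]
  rfl

theorem exists_withDensity_eq_comap_prodMk {ν : Measure β} [IsFiniteMeasure ν]
    {γ : Measure (α × β)} (hγ : γ.map Prod.snd = ν) {S : Finset α}
    (hS : γ.map Prod.fst (↑S)ᶜ = 0) :
    ∃ f : α → β → ℝ≥0∞, (∀ a, Measurable (f a)) ∧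
      (∀ a, ν.withDensity (f a) = γ.comap (Prod.mk a)) ∧ ∀ᵐ y ∂ν, ∑ a ∈ S, f a y = 1 := by
  have hf : ∀ a, ν.withDensity ((γ.comap (Prod.mk a)).rnDeriv ν) = γ.comap (Prod.mk a) := by
    intro a
    have hle := hγ ▸ comap_prodMk_le_map_snd γ a
    have := isFiniteMeasure_of_le ν hle
    exact Measure.withDensity_rnDeriv_eq _ _ (Measure.absolutelyContinuous_of_le hle)
  refine ⟨fun a => (γ.comap (Prod.mk a)).rnDeriv ν, fun a => Measure.measurable_rnDeriv _ _, hf,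
    ae_eq_of_forall_setLIntegral_eq_of_sigmaFinite
      (Finset.measurable_sum _ fun a _ => Measure.measurable_rnDeriv _ _) measurable_const
      fun B hB _ => ?_⟩
  rw [lintegral_finsetSum _ fun a _ => Measure.measurable_rnDeriv _ _]
  simp only [← withDensity_apply _ hB, hf]
  rw [← Measure.finsetSum_apply, sum_comap_prodMk hS, hγ,
    show (fun _ : β => (1 : ℝ≥0∞)) = 1 from rfl, withDensity_one]

theorem lintegral_finsetSum_map_prodMk_withDensity {κ : Type*} [MeasurableSpace κ]
    {ν : Measure β} (s : Finset κ) {F : κ → β → ℝ≥0∞} (hF : ∀ x, Measurable (F x))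
    {φ : κ × β → ℝ≥0∞} (hφ : Measurable φ) :
    ∫⁻ p, φ p ∂(∑ x ∈ s, (ν.withDensity (F x)).map (Prod.mk x)) =
      ∫⁻ y, ∑ x ∈ s, F x y * φ (x, y) ∂ν := by
  rw [lintegral_finsetSum_measure, lintegral_finsetSum]
  · refine Finset.sum_congr rfl fun x _ => ?_
    rw [lintegral_map hφ measurable_prodMk_left,
      lintegral_withDensity_eq_lintegral_mul _ (hF x)
        (show Measurable fun y => φ (x, y) from hφ.comp measurable_prodMk_left)]
    rfl
  · exact fun x _ => (hF x).mul (hφ.comp measurable_prodMk_left)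

/- With `f i a` the density of the fibre of `γ i` over `a`, the coordinates are chosen
independently given the common coordinate `y`: `Γ = ∑ x, δ x ⊗ (∏ i, f i (x i)) • ν`. -/
theorem exists_gluing {ι : Type*} [Fintype ι] {ν : Measure β} [IsFiniteMeasure ν]
    {γ : ι → Measure (α × β)} (hγ : ∀ i, (γ i).map Prod.snd = ν) {S : ι → Finset α}
    (hS : ∀ i, (γ i).map Prod.fst (↑(S i))ᶜ = 0) :
    ∃ Γ : Measure ((ι → α) × β), Γ.map Prod.snd = ν ∧ ∀ i, Γ.map (fun p => (p.1 i, p.2)) = γ i := by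
  classical
  choose f hf hfibre hsum using fun i => exists_withDensity_eq_comap_prodMk (hγ i) (hS i)
  have hγ_eq : ∀ i, γ i = ∑ a ∈ S i, (ν.withDensity (f i a)).map (Prod.mk a) := fun i => by
    simp only [hfibre]
    exact (sum_map_prodMk_comap_prodMk (hS i)).symm
  have hF : ∀ x : ι → α, Measurable fun y => ∏ i, f i (x i) y :=
    fun x => Finset.measurable_prod _ fun i _ => hf i (x i)
  refine ⟨∑ x ∈ Fintype.piFinset S, (ν.withDensity fun y => ∏ i, f i (x i) y).map (Prod.mk x),
    Measure.ext_of_lintegral _ fun φ hφ => ?_, fun i => Measure.ext_of_lintegral _ fun φ hφ => ?_⟩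
  · rw [lintegral_map hφ measurable_snd,
      lintegral_finsetSum_map_prodMk_withDensity _ hF (φ := fun p => φ p.2)
        (hφ.comp measurable_snd)]
    refine lintegral_congr_ae ?_
    filter_upwards [ae_all_iff.2 hsum] with y hy
    rw [← Finset.sum_mul, ← Finset.prod_univ_sum S fun i a => f i a y,
      Finset.prod_eq_one fun i _ => hy i, one_mul]
  · rw [lintegral_map hφ (by fun_prop), lintegral_finsetSum_map_prodMk_withDensity _ hF
      (φ := fun p => φ (p.1 i, p.2)) (by fun_prop), hγ_eq i,
      lintegral_finsetSum_map_prodMk_withDensity _ (hf i) hφ]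
    refine lintegral_congr_ae ?_
    filter_upwards [ae_all_iff.2 hsum] with y hy
    exact sum_piFinset_prod_mul S (fun j a => f j a y) i (fun j _ => hy j) fun a => φ (a, y)

end Gluing

theorem two_mul_sum_sum_ite_lt {ι R : Type*} [Fintype ι] [LinearOrder ι] [Semiring R]
    (f : ι → ι → R) (hsymm : ∀ s t, f s t = f t s) (hdiag : ∀ s, f s s = 0) :
    2 * ∑ s, ∑ t, (if s < t then f s t else 0) = ∑ s, ∑ t, f s t := by
  have hsplit : ∀ s t, f s t = (if s < t then f s t else 0) + (if t < s then f t s else 0) := by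
    intro s t
    rcases lt_trichotomy s t with h | rfl | h
    · simp [h, h.not_gt]
    · simp [hdiag]
    · simp [h, h.not_gt, hsymm s t]
  symm
  calc ∑ s, ∑ t, f s t
      = ∑ s, ∑ t, ((if s < t then f s t else 0) + (if t < s then f t s else 0)) :=
        Finset.sum_congr rfl fun s _ => Finset.sum_congr rfl fun t _ => hsplit s t
    _ = ∑ s, ∑ t, (if s < t then f s t else 0) + ∑ s, ∑ t, (if t < s then f t s else 0) := by
        simp only [Finset.sum_add_distrib]
    _ = 2 * ∑ s, ∑ t, (if s < t then f s t else 0) := by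
        rw [Finset.sum_comm (f := fun s t => if t < s then f t s else 0), two_mul]

section Variance

variable {ι E : Type*} [Fintype ι] [NormedAddCommGroup E] [InnerProductSpace ℝ E]

theorem sum_mul_norm_sub_sq_eq (l : ι → ℝ) (hl : ∑ i, l i = 1) (x : ι → E) (y : E) :
    ∑ i, l i * ‖x i - y‖ ^ 2 =
      ∑ i, l i * ‖x i - ∑ j, l j • x j‖ ^ 2 + ‖y - ∑ j, l j • x j‖ ^ 2 := by
  set m := ∑ j, l j • x j
  have hcentred : ∑ i, l i • (x i - m) = 0 := by
    simp only [smul_sub, Finset.sum_sub_distrib, ← Finset.sum_smul, hl, one_smul, m, sub_self]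
  calc ∑ i, l i * ‖x i - y‖ ^ 2
      = ∑ i, (l i * ‖x i - m‖ ^ 2 + 2 * inner ℝ (l i • (x i - m)) (m - y)
          + ‖y - m‖ ^ 2 * l i) := by
        refine Finset.sum_congr rfl fun i _ => ?_
        rw [← sub_add_sub_cancel (x i) m y, norm_add_sq_real, real_inner_smul_left,
          norm_sub_rev m y]
        ring
    _ = ∑ i, l i * ‖x i - m‖ ^ 2 + ‖y - m‖ ^ 2 := by
        rw [Finset.sum_add_distrib, Finset.sum_add_distrib, ← Finset.mul_sum, ← sum_inner,
          hcentred, inner_zero_left, ← Finset.mul_sum, hl]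
        ring

theorem sum_mul_norm_sub_sq_eq_sum_lt [LinearOrder ι] (l : ι → ℝ) (hl : ∑ i, l i = 1)
    (x : ι → E) :
    ∑ i, l i * ‖x i - ∑ j, l j • x j‖ ^ 2 =
      ∑ s, ∑ t, if s < t then l s * l t * ‖x s - x t‖ ^ 2 else 0 := by
  have hpairs := two_mul_sum_sum_ite_lt (fun s t => l s * l t * ‖x s - x t‖ ^ 2)
    (fun s t => by rw [norm_sub_rev]; ring) (fun s => by simp)
  have hdouble : ∑ s, ∑ t, l s * l t * ‖x s - x t‖ ^ 2 =
      2 * ∑ i, l i * ‖x i - ∑ j, l j • x j‖ ^ 2 := by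
    calc ∑ s, ∑ t, l s * l t * ‖x s - x t‖ ^ 2
        = ∑ t, l t * ∑ s, l s * ‖x s - x t‖ ^ 2 := by
          rw [Finset.sum_comm]
          simp only [Finset.mul_sum]
          exact Finset.sum_congr rfl fun t _ => Finset.sum_congr rfl fun s _ => by ring
      _ = ∑ t, l t * (∑ i, l i * ‖x i - ∑ j, l j • x j‖ ^ 2 + ‖x t - ∑ j, l j • x j‖ ^ 2) :=
          Finset.sum_congr rfl fun t _ => by rw [sum_mul_norm_sub_sq_eq l hl x (x t)]
      _ = 2 * ∑ i, l i * ‖x i - ∑ j, l j • x j‖ ^ 2 := by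
          simp only [mul_add, Finset.sum_add_distrib, ← Finset.sum_mul, hl]
          ring
  linarith

theorem sum_ofReal_mul_norm_sub_sq_eq [LinearOrder ι] {l : ι → ℝ} (hl0 : ∀ i, 0 ≤ l i)
    (hl : ∑ i, l i = 1) (x : ι → E) (y : E) :
    ∑ i, ENNReal.ofReal (l i) * ENNReal.ofReal (‖x i - y‖ ^ 2) =
      (∑ s, ∑ t, if s < t then ENNReal.ofReal (l s * l t * ‖x s - x t‖ ^ 2) else 0)
        + ENNReal.ofReal (‖y - ∑ i, l i • x i‖ ^ 2) := by
  have hpair_nonneg : ∀ s t, 0 ≤ if s < t then l s * l t * ‖x s - x t‖ ^ 2 else 0 := by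
    intro s t
    split_ifs
    · exact mul_nonneg (mul_nonneg (hl0 s) (hl0 t)) (sq_nonneg _)
    · exact le_rfl
  have hite : ∀ s t, (if s < t then ENNReal.ofReal (l s * l t * ‖x s - x t‖ ^ 2) else 0) =
      ENNReal.ofReal (if s < t then l s * l t * ‖x s - x t‖ ^ 2 else 0) := by
    intro s t
    split_ifs <;> simp
  simp only [hite, ← ENNReal.ofReal_mul (hl0 _)]
  rw [← ENNReal.ofReal_sum_of_nonneg fun i _ => mul_nonneg (hl0 i) (sq_nonneg _),
    sum_mul_norm_sub_sq_eq l hl x y, sum_mul_norm_sub_sq_eq_sum_lt l hl x,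
    ENNReal.ofReal_add (Finset.sum_nonneg fun s _ => Finset.sum_nonneg fun t _ =>
      hpair_nonneg s t) (sq_nonneg _),
    ENNReal.ofReal_sum_of_nonneg fun s _ => Finset.sum_nonneg fun t _ => hpair_nonneg s t]
  simp only [ENNReal.ofReal_sum_of_nonneg fun t _ => hpair_nonneg _ t]

end Variance

section Barycenter

variable {d N : ℕ} {μ : Fin N → Measure (Pt d)} {l : Fin N → ℝ} {ν : Measure (Pt d)}

@[fun_prop]
theorem measurable_wmean (l : Fin N → ℝ) : Measurable (wmean l : (Fin N → Pt d) → Pt d) := by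
  unfold wmean
  fun_prop

theorem W2sq_dirac_ne_top {ρ : Measure (Pt d)} [IsProbabilityMeasure ρ] {S : Finset (Pt d)}
    (hS : ρ (↑S)ᶜ = 0) (y : Pt d) : W2sq ρ (Measure.dirac y) ≠ ⊤ := by
  refine ne_top_of_le_ne_top ?_ (W2sq_le_lintegral (isCoupling_prod ρ (Measure.dirac y)))
  rw [Measure.prod_dirac, lintegral_map (by fun_prop) (by fun_prop),
    lintegral_eq_sum_of_compl_null hS]
  exact ENNReal.sum_ne_top.2 fun x _ => ENNReal.mul_ne_top ENNReal.ofReal_ne_top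
    (measure_ne_top _ _)

theorem Psi_ne_top [∀ i, IsProbabilityMeasure (μ i)] {S : Fin N → Finset (Pt d)}
    (hS : ∀ i, μ i (↑(S i))ᶜ = 0)
    (hopt : ∀ ν' : Measure (Pt d), IsProbabilityMeasure ν' → Psi l μ ν ≤ Psi l μ ν') :
    Psi l μ ν ≠ ⊤ :=
  ne_top_of_le_ne_top (ENNReal.sum_ne_top.2 fun i _ => ENNReal.mul_ne_top ENNReal.ofReal_ne_top
    (W2sq_dirac_ne_top (hS i) 0)) (hopt _ inferInstance)

theorem sum_ofReal_mul_le_Psi_add (hl : InSimplex l) {ε : ℝ≥0∞} {c : Fin N → ℝ≥0∞}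
    (hc : ∀ i, c i ≤ W2sq (μ i) ν + ε) :
    ∑ i, ENNReal.ofReal (l i) * c i ≤ Psi l μ ν + ε := by
  calc ∑ i, ENNReal.ofReal (l i) * c i ≤ ∑ i, ENNReal.ofReal (l i) * (W2sq (μ i) ν + ε) :=
        Finset.sum_le_sum fun i _ => mul_le_mul_right (hc i) _
    _ = Psi l μ ν + (∑ i, ENNReal.ofReal (l i)) * ε := by
        simp only [Psi, mul_add, Finset.sum_add_distrib, Finset.sum_mul]
    _ = Psi l μ ν + ε := by
        rw [← ENNReal.ofReal_sum_of_nonneg fun i _ => (hl.1 i).le, hl.2, ENNReal.ofReal_one,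
          one_mul]

theorem Psi_map_wmean_le_MOT (hl : InSimplex l) {π : Measure (Fin N → Pt d)}
    (hπ : IsPlan μ π) : Psi l μ (π.map (wmean l)) ≤ MOT l π := by
  have := hπ.1
  have hW : ∀ i, W2sq (μ i) (π.map (wmean l)) ≤
      ∫⁻ x, ENNReal.ofReal (‖x i - wmean l x‖ ^ 2) ∂π := by
    intro i
    have hc := isCoupling_map_prodMk (π := π) (measurable_pi_apply i) (measurable_wmean l)
    rw [hπ.2 i] at hc
    refine (W2sq_le_lintegral hc).trans_eq ?_
    rw [lintegral_map (by fun_prop) ((measurable_pi_apply i).prodMk (measurable_wmean l))]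
  calc Psi l μ (π.map (wmean l))
      ≤ ∑ i, ENNReal.ofReal (l i) * ∫⁻ x, ENNReal.ofReal (‖x i - wmean l x‖ ^ 2) ∂π :=
        Finset.sum_le_sum fun i _ => mul_le_mul_right (hW i) _
    _ = ∫⁻ x, ∑ i, ENNReal.ofReal (l i) * ENNReal.ofReal (‖x i - wmean l x‖ ^ 2) ∂π := by
        rw [lintegral_finsetSum _ fun i _ => by fun_prop]
        exact Finset.sum_congr rfl fun i _ => (lintegral_const_mul _ (by fun_prop)).symm
    _ = MOT l π := lintegral_congr fun x => by
        rw [sum_ofReal_mul_norm_sub_sq_eq (fun i => (hl.1 i).le) hl.2, wmean, sub_self,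
          norm_zero]
        simp

theorem measurable_MOT_integrand (l : Fin N → ℝ) :
    Measurable fun x : Fin N → Pt d =>
      ∑ s, ∑ t, if s < t then ENNReal.ofReal (l s * l t * ‖x s - x t‖ ^ 2) else 0 :=
  Finset.measurable_sum _ fun s _ => Finset.measurable_sum _ fun t _ => by split_ifs <;> fun_prop

def wmeanDefect (l : Fin N → ℝ) (Γ : Measure ((Fin N → Pt d) × Pt d)) : ℝ≥0∞ :=
  ∫⁻ p, ENNReal.ofReal (‖p.2 - wmean l p.1‖ ^ 2) ∂Γ

section Glued

variable {γ : Fin N → Measure (Pt d × Pt d)} {Γ : Measure ((Fin N → Pt d) × Pt d)}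

theorem isPlan_map_fst [IsProbabilityMeasure ν] (hγ : ∀ i, IsCoupling (μ i) ν (γ i))
    (hΓ : ∀ i, Γ.map (fun p => (p.1 i, p.2)) = γ i) (hΓν : Γ.map Prod.snd = ν) :
    IsPlan μ (Γ.map Prod.fst) := by
  have : IsProbabilityMeasure Γ :=
    (Measure.isProbabilityMeasure_map_iff measurable_snd.aemeasurable).1 (hΓν ▸ inferInstance)
  refine ⟨Measure.isProbabilityMeasure_map measurable_fst.aemeasurable, fun i => ?_⟩
  rw [Measure.map_map (measurable_pi_apply i) measurable_fst, ← (hγ i).2.1, ← hΓ i,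
    Measure.map_map measurable_fst (by fun_prop)]
  rfl

theorem MOT_add_wmeanDefect_eq (hl : InSimplex l)
    (hΓ : ∀ i, Γ.map (fun p => (p.1 i, p.2)) = γ i) :
    MOT l (Γ.map Prod.fst) + wmeanDefect l Γ =
      ∑ i, ENNReal.ofReal (l i) * ∫⁻ p, ENNReal.ofReal (‖p.1 - p.2‖ ^ 2) ∂(γ i) := by
  calc MOT l (Γ.map Prod.fst) + wmeanDefect l Γ
      = ∫⁻ p, (∑ s, ∑ t, if s < t then ENNReal.ofReal (l s * l t * ‖p.1 s - p.1 t‖ ^ 2) else 0)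
          + ENNReal.ofReal (‖p.2 - wmean l p.1‖ ^ 2) ∂Γ := by
        rw [MOT, lintegral_map (measurable_MOT_integrand l) measurable_fst, wmeanDefect]
        exact (lintegral_add_left ((measurable_MOT_integrand l).comp measurable_fst) _).symm
    _ = ∫⁻ p, ∑ i, ENNReal.ofReal (l i) * ENNReal.ofReal (‖p.1 i - p.2‖ ^ 2) ∂Γ :=
        lintegral_congr fun p =>
          (sum_ofReal_mul_norm_sub_sq_eq (fun i => (hl.1 i).le) hl.2 p.1 p.2).symm
    _ = ∑ i, ENNReal.ofReal (l i) * ∫⁻ p, ENNReal.ofReal (‖p.1 - p.2‖ ^ 2) ∂(γ i) := by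
        rw [lintegral_finsetSum _ fun i _ => by fun_prop]
        refine Finset.sum_congr rfl fun i _ => ?_
        rw [lintegral_const_mul _ (by fun_prop), ← hΓ i, lintegral_map (by fun_prop) (by fun_prop)]

theorem ae_mem_piFinset {S : Fin N → Finset (Pt d)} (hS : ∀ i, μ i (↑(S i))ᶜ = 0)
    (hγ : ∀ i, IsCoupling (μ i) ν (γ i)) (hΓ : ∀ i, Γ.map (fun p => (p.1 i, p.2)) = γ i) :
    ∀ᵐ p ∂Γ, p.1 ∈ Fintype.piFinset S := by
  have hcoord : ∀ i, ∀ᵐ p ∂Γ, p.1 i ∈ S i := by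
    intro i
    have h := mem_ae_iff.2 (hS i)
    rw [← (hγ i).2.1, ← hΓ i, Measure.map_map measurable_fst (by fun_prop)] at h
    exact ae_of_ae_map (by fun_prop) h
  filter_upwards [ae_all_iff.2 hcoord] with p hp using Fintype.mem_piFinset.2 hp

theorem lintegral_infDist_sq_le_wmeanDefect {S : Fin N → Finset (Pt d)}
    (hΓν : Γ.map Prod.snd = ν) (hS : ∀ᵐ p ∂Γ, p.1 ∈ Fintype.piFinset S) :
    ∫⁻ y, ENNReal.ofReal (Metric.infDist y (wmean l '' ↑(Fintype.piFinset S)) ^ 2) ∂ν ≤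
      wmeanDefect l Γ := by
  rw [← hΓν, lintegral_map (by fun_prop) measurable_snd]
  refine lintegral_mono_ae ?_
  filter_upwards [hS] with p hp
  gcongr
  · exact Metric.infDist_nonneg
  · rw [← dist_eq_norm]
    exact Metric.infDist_le_dist_of_mem ⟨p.1, hp, rfl⟩

theorem map_snd_eq_of_wmeanDefect_eq_zero (h : wmeanDefect l Γ = 0) :
    Γ.map Prod.snd = (Γ.map Prod.fst).map (wmean l) := by
  rw [Measure.map_map (measurable_wmean l) measurable_fst]
  refine Measure.map_congr ?_
  filter_upwards [(lintegral_eq_zero_iff (by fun_prop)).1 h] with p hp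
  simpa [sub_eq_zero] using hp

end Glued

theorem wmeanDefect_le [IsProbabilityMeasure ν] (hl : InSimplex l)
    (hopt : ∀ ν' : Measure (Pt d), IsProbabilityMeasure ν' → Psi l μ ν ≤ Psi l μ ν')
    (hΨ : Psi l μ ν ≠ ⊤) {γ : Fin N → Measure (Pt d × Pt d)}
    (hγ : ∀ i, IsCoupling (μ i) ν (γ i)) {Γ : Measure ((Fin N → Pt d) × Pt d)}
    (hΓ : ∀ i, Γ.map (fun p => (p.1 i, p.2)) = γ i) (hΓν : Γ.map Prod.snd = ν) {ε : ℝ≥0∞}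
    (hcost : ∀ i, ∫⁻ p, ENNReal.ofReal (‖p.1 - p.2‖ ^ 2) ∂(γ i) ≤ W2sq (μ i) ν + ε) :
    wmeanDefect l Γ ≤ ε := by
  have hplan := isPlan_map_fst hγ hΓ hΓν
  have := hplan.1
  have hΨ_le : Psi l μ ν ≤ MOT l (Γ.map Prod.fst) :=
    (hopt _ (Measure.isProbabilityMeasure_map (measurable_wmean l).aemeasurable)).trans
      (Psi_map_wmean_le_MOT hl hplan)
  refine (ENNReal.add_le_add_iff_left hΨ).1 ?_
  calc Psi l μ ν + wmeanDefect l Γ ≤ MOT l (Γ.map Prod.fst) + wmeanDefect l Γ :=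
      add_le_add_left hΨ_le _
    _ = ∑ i, ENNReal.ofReal (l i) * ∫⁻ p, ENNReal.ofReal (‖p.1 - p.2‖ ^ 2) ∂(γ i) :=
      MOT_add_wmeanDefect_eq hl hΓ
    _ ≤ Psi l μ ν + ε := sum_ofReal_mul_le_Psi_add hl hcost

variable [∀ i, IsProbabilityMeasure (μ i)] {S : Fin N → Finset (Pt d)} [IsProbabilityMeasure ν]

/- Before `ν` is known to be finitely supported, `W2sq (μ i) ν` need not be attained, so the
argument runs with `ε`-optimal couplings and lets `ε → 0`. -/
theorem measure_compl_image_wmean_eq_zero (hS : ∀ i, μ i (↑(S i))ᶜ = 0) (hl : InSimplex l)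
    (hopt : ∀ ν' : Measure (Pt d), IsProbabilityMeasure ν' → Psi l μ ν ≤ Psi l μ ν') :
    ν (wmean l '' ↑(Fintype.piFinset S))ᶜ = 0 := by
  set T : Set (Pt d) := wmean l '' ↑(Fintype.piFinset S)
  have hΨ := Psi_ne_top hS hopt
  have hsmall : ∀ ε : ℝ≥0∞, ε ≠ 0 →
      ∫⁻ y, ENNReal.ofReal (Metric.infDist y T ^ 2) ∂ν ≤ ε := by
    intro ε hε
    have hW : ∀ i, W2sq (μ i) ν ≠ ⊤ := fun i h => hΨ <| eq_top_mono
      (Finset.single_le_sum (f := fun j => ENNReal.ofReal (l j) * W2sq (μ j) ν)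
        (fun j _ => zero_le) (Finset.mem_univ i))
      (by rw [h, ENNReal.mul_top (ENNReal.ofReal_pos.2 (hl.1 i)).ne'])
    choose γ hγ hcost using fun i => exists_isCoupling_lintegral_le_W2sq_add (hW i) hε
    obtain ⟨Γ, hΓν, hΓ⟩ := exists_gluing (fun i => (hγ i).2.2) fun i => (hγ i).2.1 ▸ hS i
    exact (lintegral_infDist_sq_le_wmeanDefect hΓν (ae_mem_piFinset hS hγ hΓ)).trans
      (wmeanDefect_le hl hopt hΨ hγ hΓ hΓν hcost)
  have hzero : ∫⁻ y, ENNReal.ofReal (Metric.infDist y T ^ 2) ∂ν = 0 :=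
    nonpos_iff_eq_zero.1 (le_of_forall_gt_imp_ge_of_dense fun ε hε => hsmall ε hε.ne')
  have hT : IsClosed T := ((Fintype.piFinset S).finite_toSet.image _).isClosed
  have hTne : T.Nonempty := (Finset.coe_nonempty.2 (Fintype.piFinset_nonempty.2 fun i =>
    Finset.nonempty_iff_ne_empty.2 fun h => by simpa [h] using hS i)).image _
  refine mem_ae_iff.1 ?_
  filter_upwards [(lintegral_eq_zero_iff (by fun_prop)).1 hzero] with y hy
  rw [hT.mem_iff_infDist_zero hTne]
  simpa using hy

theorem exists_isPlan_MOT_le_Psi_map_eq (hS : ∀ i, μ i (↑(S i))ᶜ = 0) (hl : InSimplex l)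
    (hopt : ∀ ν' : Measure (Pt d), IsProbabilityMeasure ν' → Psi l μ ν ≤ Psi l μ ν')
    (hν : FinitelySupported ν) :
    ∃ π, IsPlan μ π ∧ MOT l π ≤ Psi l μ ν ∧ ν = π.map (wmean l) := by
  obtain ⟨T, hT⟩ := hν
  choose γ hγ hcost using fun i => exists_isCoupling_lintegral_eq_W2sq (hS i) hT
  obtain ⟨Γ, hΓν, hΓ⟩ := exists_gluing (fun i => (hγ i).2.2) fun i => (hγ i).2.1 ▸ hS i
  have hcost' : ∀ i, ∫⁻ p, ENNReal.ofReal (‖p.1 - p.2‖ ^ 2) ∂(γ i) ≤ W2sq (μ i) ν + 0 :=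
    fun i => by rw [add_zero, hcost i]
  have hD : wmeanDefect l Γ = 0 :=
    nonpos_iff_eq_zero.1 (wmeanDefect_le hl hopt (Psi_ne_top hS hopt) hγ hΓ hΓν hcost')
  refine ⟨Γ.map Prod.fst, isPlan_map_fst hγ hΓ hΓν, ?_, ?_⟩
  · calc MOT l (Γ.map Prod.fst) ≤ MOT l (Γ.map Prod.fst) + wmeanDefect l Γ := le_self_add
      _ = ∑ i, ENNReal.ofReal (l i) * ∫⁻ p, ENNReal.ofReal (‖p.1 - p.2‖ ^ 2) ∂(γ i) :=
        MOT_add_wmeanDefect_eq hl hΓ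
      _ ≤ Psi l μ ν + 0 := sum_ofReal_mul_le_Psi_add hl hcost'
      _ = Psi l μ ν := add_zero _
  · rw [← map_snd_eq_of_wmeanDefect_eq_zero hD, hΓν]

end Barycenter

/-- Every optimal Wasserstein-2 barycenter `ν̂` is the pushforward of some
optimal multi-marginal plan under the weighted mean map; in particular, it is finitely
supported with support contained in the set of `λ`-weighted means of support points
of the `μ i`. -/
theorem stmt4 {d N : ℕ} (μ : Fin N → Measure (Pt d))
    (hμ : ∀ i, IsProbabilityMeasure (μ i) ∧ FinitelySupported (μ i))
    (l : Fin N → ℝ) (hl : InSimplex l)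
    (nuhat : Measure (Pt d)) (hν : IsProbabilityMeasure nuhat)
    (hopt : ∀ ν : Measure (Pt d), IsProbabilityMeasure ν → Psi l μ nuhat ≤ Psi l μ ν) :
    (∃ pihat : Measure (Fin N → Pt d), IsPlan μ pihat ∧
        (∀ π, IsPlan μ π → MOT l pihat ≤ MOT l π) ∧ nuhat = pihat.map (wmean l))
    ∧ FinitelySupported nuhat ∧ (msupport nuhat).Finite
    ∧ msupport nuhat ⊆
        {y : Pt d | ∃ x : Fin N → Pt d, (∀ i, x i ∈ msupport (μ i)) ∧ y = ∑ i, l i • x i} := by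
  have := fun i => (hμ i).1
  choose S hS hS_atoms using fun i => (hμ i).2.exists_finset
  have hT := measure_compl_image_wmean_eq_zero hS hl hopt
  have hT_fin := (Fintype.piFinset S).finite_toSet.image (wmean l)
  have hν_fin := finitelySupported_of_compl_null hT_fin hT
  obtain ⟨π, hπ, hπ_le, hπ_map⟩ := exists_isPlan_MOT_le_Psi_map_eq hS hl hopt hν_fin
  refine ⟨⟨π, hπ, fun π' hπ' => ?_, hπ_map⟩, hν_fin, hT_fin.subset
    (msupport_subset_of_compl_null hT), (msupport_subset_of_compl_null hT).trans ?_⟩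
  · have := hπ'.1
    exact hπ_le.trans <| (hopt _ (Measure.isProbabilityMeasure_map
      (measurable_wmean l).aemeasurable)).trans (Psi_map_wmean_le_MOT hl hπ')
  · rintro _ ⟨x, hx, rfl⟩
    exact ⟨x, fun i => hS_atoms i _ (Fintype.mem_piFinset.1 hx i), rfl⟩
end
end

section
/- Let π̂ = Σ_{j=1}^M π̂_j δ(x̂_{1,j},…,x̂_{N,j}) (with π̂_j > 0 and the N-tuples (x̂_{1,j},…,x̂_{N,j}) pairwise distinct) be an optimal plan minimizing Φ over Π(μ¹,…,μ^N). Then the weighted means m̂_j = Σ_{i=1}^N λ_i x̂_{i,j} are pairwise distinct: m̂_j ≠ m̂_k whenever j ≠ k. -/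
open MeasureTheory
open scoped ENNReal

noncomputable section

/-!
If two atoms `x j ≠ x k` of the optimal plan had the same weighted mean `m`, pick a coordinate
`i` where they differ and exchange their `i`-th entries, moving mass `ε = min (w j) (w k)` from
the two atoms onto the two exchanged tuples; this keeps every marginal. Since `∑ λ = 1`, the cost
of a tuple `y` is `∑ λₛ ‖yₛ‖² - ‖∑ λₛ yₛ‖²`. The exchange preserves the sum of the first terms,
while the two means become `m ± λᵢ (x k i - x j i)`, so by the parallelogram law the cost drops
by `2 ε ‖λᵢ (x k i - x j i)‖² > 0`, contradicting optimality.
-/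

open Finset Function

lemma sum_sum_eq_two_nsmul_sum_sum_ite_lt {ι M : Type*} [Fintype ι] [LinearOrder ι]
    [AddCommMonoid M]
    (f : ι → ι → M) (hsymm : ∀ s t, f s t = f t s) (hdiag : ∀ s, f s s = 0) :
    ∑ s, ∑ t, f s t = 2 • ∑ s, ∑ t, if s < t then f s t else 0 := by
  have hsplit : ∀ s t, f s t = (if s < t then f s t else 0) + if t < s then f t s else 0 := by
    intro s t
    rcases lt_trichotomy s t with h | rfl | h
    · simp [h, h.not_gt]
    · simp [hdiag]
    · simp [h, h.not_gt, hsymm s t]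
  calc ∑ s, ∑ t, f s t
      = ∑ s, ∑ t, ((if s < t then f s t else 0) + if t < s then f t s else 0) := by
        simp only [← hsplit]
    _ = _ := by
        simp only [sum_add_distrib]
        rw [sum_comm (f := fun s t => if t < s then f t s else 0), two_nsmul]

lemma sum_sum_mul_norm_sub_sq {ι E : Type*} [Fintype ι] [NormedAddCommGroup E]
    [InnerProductSpace ℝ E] (l : ι → ℝ) (y : ι → E) :
    ∑ s, ∑ t, l s * l t * ‖y s - y t‖ ^ 2
      = 2 * (∑ t, l t) * ∑ s, l s * ‖y s‖ ^ 2 - 2 * ‖∑ s, l s • y s‖ ^ 2 := by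
  have hmean : ‖∑ s, l s • y s‖ ^ 2 = ∑ s, ∑ t, l s * l t * inner ℝ (y s) (y t) := by
    rw [← real_inner_self_eq_norm_sq, sum_inner]
    simp only [inner_sum, real_inner_smul_left, real_inner_smul_right, mul_assoc]
    exact sum_congr rfl fun _ _ => sum_congr rfl fun _ _ => mul_left_comm _ _ _
  rw [hmean]
  simp only [norm_sub_sq_real, mul_sub, mul_add, sum_add_distrib, sum_sub_distrib, mul_sum, sum_mul]
  rw [sum_comm (f := fun s t => l s * l t * ‖y t‖ ^ 2)]
  simp only [← sum_sub_distrib, ← sum_add_distrib]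
  exact sum_congr rfl fun _ _ => sum_congr rfl fun _ _ => by ring

lemma sum_apply_update {ι α G : Type*} [Fintype ι] [DecidableEq ι] [AddCommGroup G]
    (F : ι → α → G) (p : ι → α) (i : ι) (v : α) :
    ∑ s, F s (update p i v s) = ∑ s, F s (p s) + (F i v - F i (p i)) := by
  simp only [apply_update F p i v, sum_update_of_mem (mem_univ i)]
  rw [← add_sum_erase _ _ (mem_univ i), sdiff_singleton_eq_erase]
  abel

lemma sum_ofReal_smul_eq_sub_single_add {ι T : Type*} [Fintype ι] [DecidableEq ι]
    [AddCommMonoid T] [Module ℝ≥0∞ T] (w : ι → ℝ) {j k : ι} (hjk : j ≠ k) {ε : ℝ} (hε : 0 ≤ ε)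
    (hj : ε ≤ w j) (hk : ε ≤ w k) (H : ι → T) :
    ∑ r, ENNReal.ofReal (w r) • H r
      = ∑ r, ENNReal.ofReal ((w - Pi.single j ε - Pi.single k ε : ι → ℝ) r) • H r
        + ENNReal.ofReal ε • H j + ENNReal.ofReal ε • H k := by
  have hsplit : ∀ r, ENNReal.ofReal (w r) • H r
      = ENNReal.ofReal ((w - Pi.single j ε - Pi.single k ε : ι → ℝ) r) • H r
        + (Pi.single j (ENNReal.ofReal ε • H j) : ι → T) r
        + (Pi.single k (ENNReal.ofReal ε • H k) : ι → T) r := by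
    intro r
    have hpeel : ∀ {a : ℝ}, ε ≤ a →
        ENNReal.ofReal a • H r = ENNReal.ofReal (a - ε) • H r + ENNReal.ofReal ε • H r := by
      intro a ha
      rw [← add_smul, ← ENNReal.ofReal_add (sub_nonneg.2 ha) hε, sub_add_cancel]
    rcases eq_or_ne r j with rfl | hrj
    · simpa [hjk] using hpeel hj
    rcases eq_or_ne r k with rfl | hrk
    · simpa [hrj] using hpeel hk
    · simp [hrj, hrk]
  simp only [hsplit, sum_add_distrib, Fintype.sum_pi_single']

section PairCost

variable {ι E : Type*} [Fintype ι] [LinearOrder ι] [NormedAddCommGroup E]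

def pairCost (l : ι → ℝ) (y : ι → E) : ℝ :=
  ∑ s, ∑ t, if s < t then l s * l t * ‖y s - y t‖ ^ 2 else 0

lemma pairCost_nonneg {l : ι → ℝ} (hl : ∀ i, 0 ≤ l i) (y : ι → E) : 0 ≤ pairCost l y :=
  sum_nonneg fun s _ => sum_nonneg fun t _ => by
    have := hl s; have := hl t
    split_ifs <;> positivity

variable [InnerProductSpace ℝ E]

lemma pairCost_eq {l : ι → ℝ} (hl : ∑ i, l i = 1) (y : ι → E) :
    pairCost l y = ∑ s, l s * ‖y s‖ ^ 2 - ‖∑ s, l s • y s‖ ^ 2 := by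
  have h := sum_sum_eq_two_nsmul_sum_sum_ite_lt (fun s t => l s * l t * ‖y s - y t‖ ^ 2)
    (fun s t => by rw [norm_sub_rev]; ring) (fun s => by simp)
  rw [sum_sum_mul_norm_sub_sq, hl, two_nsmul] at h
  rw [pairCost]
  linarith

lemma pairCost_swap_add_lt [DecidableEq ι] {l : ι → ℝ} (hl : ∑ i, l i = 1) {i : ι} (hli : l i ≠ 0)
    {p q : ι → E} (hpq : p i ≠ q i) (hm : ∑ s, l s • p s = ∑ s, l s • q s) :
    pairCost l (update p i (q i)) + pairCost l (update q i (p i))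
      < pairCost l p + pairCost l q := by
  have hv : 0 < ‖l i • (q i - p i)‖ := norm_pos_iff.2 (smul_ne_zero hli (sub_ne_zero.2 hpq.symm))
  simp only [pairCost_eq hl, sum_apply_update (fun s z => l s * ‖z‖ ^ 2),
    sum_apply_update (fun s z => l s • z), ← hm, ← smul_sub]
  rw [← neg_sub (q i), smul_neg, ← sub_eq_add_neg]
  nlinarith [norm_add_sq_real (∑ s, l s • p s) (l i • (q i - p i)),
    norm_sub_sq_real (∑ s, l s • p s) (l i • (q i - p i))]

end PairCost

section Plans

variable {d N : ℕ}

lemma MOT_eq_lintegral_pairCost {l : Fin N → ℝ} (hl : ∀ i, 0 ≤ l i) (π : Measure (Fin N → Pt d)) :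
    MOT l π = ∫⁻ y, ENNReal.ofReal (pairCost l y) ∂π := by
  refine lintegral_congr fun y => ?_
  have hterm : ∀ s t : Fin N, 0 ≤ if s < t then l s * l t * ‖y s - y t‖ ^ 2 else 0 := fun s t => by
    have := hl s; have := hl t
    split_ifs <;> positivity
  rw [pairCost, ENNReal.ofReal_sum_of_nonneg fun s _ => sum_nonneg fun t _ => hterm s t]
  refine sum_congr rfl fun s _ => ?_
  rw [ENNReal.ofReal_sum_of_nonneg fun t _ => hterm s t]
  refine sum_congr rfl fun t _ => ?_
  split_ifs <;> simp

lemma MOT_sum_dirac_ne_top (l : Fin N → ℝ) {M : ℕ} (c : Fin M → ℝ) (y : Fin M → Fin N → Pt d) :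
    MOT l (∑ r, ENNReal.ofReal (c r) • Measure.dirac (y r)) ≠ ⊤ := by
  rw [MOT, lintegral_finsetSum_measure]
  refine ENNReal.sum_ne_top.2 fun r _ => ?_
  rw [lintegral_smul_measure, lintegral_dirac]
  refine ENNReal.mul_ne_top ENNReal.ofReal_ne_top (ENNReal.sum_ne_top.2 fun s _ =>
    ENNReal.sum_ne_top.2 fun t _ => ?_)
  split_ifs <;> simp

lemma MOT_add_dirac_add_dirac {l : Fin N → ℝ} (hl : ∀ i, 0 ≤ l i) (ρ : Measure (Fin N → Pt d))
    {ε : ℝ} (hε : 0 ≤ ε) (p q : Fin N → Pt d) :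
    MOT l (ρ + ENNReal.ofReal ε • Measure.dirac p + ENNReal.ofReal ε • Measure.dirac q)
      = MOT l ρ + ENNReal.ofReal (ε * (pairCost l p + pairCost l q)) := by
  simp only [MOT_eq_lintegral_pairCost hl, lintegral_add_measure, lintegral_smul_measure,
    lintegral_dirac, smul_eq_mul, add_assoc]
  rw [← ENNReal.ofReal_mul hε, ← ENNReal.ofReal_mul hε, ← ENNReal.ofReal_add, mul_add]
  · exact mul_nonneg hε (pairCost_nonneg hl p)
  · exact mul_nonneg hε (pairCost_nonneg hl q)

lemma MOT_swap_lt {l : Fin N → ℝ} (hl : InSimplex l) {ρ : Measure (Fin N → Pt d)}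
    (hρ : MOT l ρ ≠ ⊤) {ε : ℝ} (hε : 0 < ε) {i : Fin N} {p q : Fin N → Pt d} (hpq : p i ≠ q i)
    (hm : ∑ s, l s • p s = ∑ s, l s • q s) :
    MOT l (ρ + ENNReal.ofReal ε • Measure.dirac (update p i (q i))
        + ENNReal.ofReal ε • Measure.dirac (update q i (p i)))
      < MOT l (ρ + ENNReal.ofReal ε • Measure.dirac p + ENNReal.ofReal ε • Measure.dirac q) := by
  have hl0 : ∀ i, 0 ≤ l i := fun i => (hl.1 i).le
  rw [MOT_add_dirac_add_dirac hl0 _ hε.le, MOT_add_dirac_add_dirac hl0 _ hε.le]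
  refine ENNReal.add_lt_add_left hρ ((ENNReal.ofReal_lt_ofReal_iff_of_nonneg ?_).2 ?_)
  · exact mul_nonneg hε.le (add_nonneg (pairCost_nonneg hl0 _) (pairCost_nonneg hl0 _))
  · exact mul_lt_mul_of_pos_left (pairCost_swap_add_lt hl.2 (hl.1 i).ne' hpq hm) hε

lemma IsPlan.swap {μ : Fin N → Measure (Pt d)} {ρ : Measure (Fin N → Pt d)} {c : ℝ≥0∞}
    {p q : Fin N → Pt d} (h : IsPlan μ (ρ + c • Measure.dirac p + c • Measure.dirac q))
    (i : Fin N) :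
    IsPlan μ (ρ + c • Measure.dirac (update p i (q i)) + c • Measure.dirac (update q i (p i))) := by
  refine ⟨⟨?_⟩, fun i' => ?_⟩
  · rw [← h.1.measure_univ]
    simp
  · rw [← h.2 i']
    simp only [Measure.map_add _ _ (measurable_pi_apply i'), Measure.map_smul,
      Measure.map_dirac' (measurable_pi_apply i')]
    rcases eq_or_ne i' i with rfl | hne
    · simp only [update_self, add_assoc, add_comm (c • Measure.dirac (p i'))]
    · simp only [update_of_ne hne]

end Plans

theorem stmt6_general {d N M : ℕ} (μ : Fin N → Measure (Pt d))
    (l : Fin N → ℝ) (hl : InSimplex l)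
    (w : Fin M → ℝ) (hw : ∀ j, 0 < w j)
    (x : Fin M → Fin N → Pt d) (hx : Function.Injective x)
    (pihat : Measure (Fin N → Pt d))
    (hrep : pihat = ∑ j, ENNReal.ofReal (w j) • Measure.dirac (x j))
    (hplan : IsPlan μ pihat)
    (hopt : ∀ π, IsPlan μ π → MOT l pihat ≤ MOT l π) :
    ∀ j k : Fin M, j ≠ k → (∑ i, l i • x j i) ≠ ∑ i, l i • x k i := by
  intro j k hjk hm
  obtain ⟨i, hi⟩ := Function.ne_iff.mp (hx.ne hjk)
  have hε : 0 < min (w j) (w k) := lt_min (hw j) (hw k)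
  rw [hrep, sum_ofReal_smul_eq_sub_single_add w hjk hε.le (min_le_left _ _) (min_le_right _ _)]
    at hplan hopt
  exact (hopt _ (hplan.swap i)).not_gt (MOT_swap_lt hl (MOT_sum_dirac_ne_top l _ x) hε hi hm)

/-- If `π̂ = Σ_j π̂_j δ(x̂_{1,j},…,x̂_{N,j})` (positive weights, pairwise
distinct tuples) is an optimal MOT plan, then the weighted means
`m̂_j = Σ_i λ_i x̂_{i,j}` are pairwise distinct. -/
theorem stmt6 {d N M : ℕ} (μ : Fin N → Measure (Pt d))
    (hμ : ∀ i, IsProbabilityMeasure (μ i) ∧ FinitelySupported (μ i))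
    (l : Fin N → ℝ) (hl : InSimplex l)
    (w : Fin M → ℝ) (hw : ∀ j, 0 < w j) (hwsum : ∑ j, w j = 1)
    (x : Fin M → Fin N → Pt d) (hx : Function.Injective x)
    (pihat : Measure (Fin N → Pt d))
    (hrep : pihat = ∑ j, ENNReal.ofReal (w j) • Measure.dirac (x j))
    (hplan : IsPlan μ pihat)
    (hopt : ∀ π, IsPlan μ π → MOT l pihat ≤ MOT l π) :
    ∀ j k : Fin M, j ≠ k → (∑ i, l i • x j i) ≠ ∑ i, l i • x k i :=
  stmt6_general μ l hl w hw x hx pihat hrep hplan hopt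
end
end
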